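/- In the d-dimensional hypercube with d ≥ 10, let A = {{1},…,{d'}} and B = {{d'+1},…,{2d'}} with 2d' ≤ d and d' > 4, with μ_A, μ_B uniform on A and B. The transportation τ({i},{d'+i}) = 1/d' is optimal, and the induced midpoint distribution μ_C (uniform over the two midpoints of each pair {i},{d'+i}) has entropy S(μ_C) = ln(d')/2 + ln 2 < ln(d') = (S(μ_A)+S(μ_B))/2. -/
import Mathlib


open Finset
open scoped symmDiff Classical

/-- Hamming (symmetric-difference) distance on the Boolean lattice. -/
def bdist {d : ℕ} (a b : Finset (Fin d)) : ℕ := (a ∆ b).card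

section
variable {α : Type*} [Fintype α]

/-- `τ` is a transportation from `μA` to `μB`. -/
def IsTransport (τ : α → α → ℝ) (μA μB : α → ℝ) : Prop :=
  (∀ a b, 0 ≤ τ a b) ∧ (∀ a, ∑ b, τ a b = μA a) ∧ (∀ b, ∑ a, τ a b = μB b)

/-- Quadratic Wasserstein cost. -/
noncomputable def cost2 (dist : α → α → ℕ) (τ : α → α → ℝ) : ℝ :=
  ∑ a, ∑ b, τ a b * ((dist a b : ℝ)) ^ 2

/-- `τ` is an optimal (W²-minimizing) transportation. -/
def IsOptimalTransport (dist : α → α → ℕ) (τ : α → α → ℝ) (μA μB : α → ℝ) : Prop :=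
  IsTransport τ μA μB ∧
    ∀ τ' : α → α → ℝ, IsTransport τ' μA μB → cost2 dist τ ≤ cost2 dist τ'

/-- Entropy of a (finitely supported) probability distribution. -/
noncomputable def ent (μ : α → ℝ) : ℝ := ∑ x, μ x * Real.log (μ x)⁻¹

end

variable (d d' : ℕ)

/-- Uniform distribution on `A = {{1},…,{d'}}`. -/
noncomputable def muA : Finset (Fin d) → ℝ := fun x =>
  if ∃ j : Fin d, (j : ℕ) < d' ∧ x = {j} then ((d' : ℝ))⁻¹ else 0

/-- Uniform distribution on `B = {{d'+1},…,{2d'}}`. -/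
noncomputable def muB : Finset (Fin d) → ℝ := fun x =>
  if ∃ j : Fin d, d' ≤ (j : ℕ) ∧ (j : ℕ) < 2 * d' ∧ x = {j} then ((d' : ℝ))⁻¹ else 0

/-- The transportation `τ({i}, {d'+i}) = 1/d'`. -/
noncomputable def tau0 : Finset (Fin d) → Finset (Fin d) → ℝ := fun x y =>
  if ∃ j j' : Fin d, (j : ℕ) < d' ∧ (j' : ℕ) = (j : ℕ) + d' ∧ x = {j} ∧ y = {j'}
  then ((d' : ℝ))⁻¹ else 0

/-- The induced midpoint distribution: mass `1/2` on `∅` and `1/(2d')` on each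
`{i, d'+i}`. -/
noncomputable def muC : Finset (Fin d) → ℝ := fun x =>
  if x = (∅ : Finset (Fin d)) then 1 / 2
  else if ∃ j j' : Fin d, (j : ℕ) < d' ∧ (j' : ℕ) = (j : ℕ) + d' ∧ x = {j, j'}
  then (2 * (d' : ℝ))⁻¹ else 0

section AuxLemmas

lemma sum_support_image {d : ℕ} {ι : Type*} [Fintype ι] (f : Finset (Fin d) → ℝ)
    (g : ι → Finset (Fin d)) (hg : Function.Injective g)
    (hsupp : ∀ x, f x ≠ 0 → ∃ i, x = g i) :
    ∑ x, f x = ∑ i, f (g i) := by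
  rw [← Finset.sum_image (f := f) (g := g)
    (fun a _ b _ h => hg h) (s := Finset.univ)]
  apply (Finset.sum_subset (Finset.subset_univ _) _).symm
  intro x _ hx
  by_contra h
  obtain ⟨i, rfl⟩ := hsupp x h
  exact hx (Finset.mem_image.2 ⟨i, Finset.mem_univ _, rfl⟩)

variable {d d'}

lemma bdist_singletons {j j' : Fin d} (h : j ≠ j') :
    bdist ({j} : Finset (Fin d)) {j'} = 2 := by
  rw [bdist, symmDiff_def]
  simp [Finset.sdiff_singleton_eq_erase, Finset.erase_singleton, h, h.symm]

lemma tau0_row (h2 : 2 * d' ≤ d) (a : Finset (Fin d)) :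
    ∑ b, tau0 d d' a b = muA d d' a := by
  by_cases hA : ∃ j : Fin d, (j : ℕ) < d' ∧ a = {j}
  · obtain ⟨j, hj, rfl⟩ := hA
    have hj' : (j : ℕ) + d' < d := lt_of_lt_of_le (by omega) h2
    set j' : Fin d := ⟨(j : ℕ) + d', hj'⟩ with hj'def
    have key : ∀ b : Finset (Fin d), tau0 d d' {j} b =
        if b = ({j'} : Finset (Fin d)) then ((d' : ℝ))⁻¹ else 0 := by
      intro b
      rw [tau0]
      congr 1
      simp only [eq_iff_iff]
      constructor
      · rintro ⟨k, k', hk, hk', hkj, rfl⟩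
        have : k = j := Finset.singleton_injective hkj.symm
        subst this
        congr 1
        exact Fin.ext hk'
      · rintro rfl
        exact ⟨j, j', hj, rfl, rfl, rfl⟩
    rw [Finset.sum_congr rfl (fun b _ => key b), Finset.sum_ite_eq' Finset.univ,
      if_pos (Finset.mem_univ _), muA, if_pos ⟨j, hj, rfl⟩]
  · have key : ∀ b : Finset (Fin d), tau0 d d' a b = 0 := by
      intro b
      rw [tau0, if_neg]
      rintro ⟨k, k', hk, _, rfl, rfl⟩
      exact hA ⟨k, hk, rfl⟩
    rw [Finset.sum_congr rfl (fun b _ => key b), Finset.sum_const_zero, muA, if_neg hA]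

lemma tau0_col (h2 : 2 * d' ≤ d) (b : Finset (Fin d)) :
    ∑ a, tau0 d d' a b = muB d d' b := by
  by_cases hB : ∃ j : Fin d, d' ≤ (j : ℕ) ∧ (j : ℕ) < 2 * d' ∧ b = {j}
  · obtain ⟨j', h1, hlt, rfl⟩ := hB
    have hjlt : (j' : ℕ) - d' < d := by omega
    set j : Fin d := ⟨(j' : ℕ) - d', hjlt⟩ with hjdef
    have key : ∀ a : Finset (Fin d), tau0 d d' a {j'} =
        if a = ({j} : Finset (Fin d)) then ((d' : ℝ))⁻¹ else 0 := by
      intro a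
      rw [tau0]
      congr 1
      simp only [eq_iff_iff]
      constructor
      · rintro ⟨k, k', hk, hk', rfl, hkj⟩
        have : k' = j' := Finset.singleton_injective hkj.symm
        subst this
        congr 1
        exact Fin.ext (by simp only [hjdef]; omega)
      · rintro rfl
        refine ⟨j, j', by simp only [hjdef]; omega, by simp only [hjdef]; omega, rfl, rfl⟩
    rw [Finset.sum_congr rfl (fun a _ => key a), Finset.sum_ite_eq' Finset.univ,
      if_pos (Finset.mem_univ _), muB, if_pos ⟨j', h1, hlt, rfl⟩]
  · have key : ∀ a : Finset (Fin d), tau0 d d' a b = 0 := by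
      intro a
      rw [tau0, if_neg]
      rintro ⟨k, k', hk, hk', rfl, rfl⟩
      exact hB ⟨k', by omega, by omega, rfl⟩
    rw [Finset.sum_congr rfl (fun a _ => key a), Finset.sum_const_zero, muB, if_neg hB]

lemma tau0_transport (h2 : 2 * d' ≤ d) :
    IsTransport (tau0 d d') (muA d d') (muB d d') := by
  refine ⟨fun a b => ?_, tau0_row h2, tau0_col h2⟩
  rw [tau0]
  split
  · positivity
  · exact le_refl 0

lemma cost2_transport (h2 : 2 * d' ≤ d) {τ : Finset (Fin d) → Finset (Fin d) → ℝ}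
    (h : IsTransport τ (muA d d') (muB d d')) :
    cost2 bdist τ = 4 * ∑ a, muA d d' a := by
  obtain ⟨hpos, hrow, hcol⟩ := h
  have key : ∀ a b : Finset (Fin d), τ a b * ((bdist a b : ℝ)) ^ 2 = 4 * τ a b := by
    intro a b
    by_cases hz : τ a b = 0
    · rw [hz]; ring
    · have hA : muA d d' a ≠ 0 := by
        rw [← hrow a]
        intro hc
        have hle : τ a b ≤ ∑ b', τ a b' :=
          Finset.single_le_sum (fun b' _ => hpos a b') (Finset.mem_univ b)
        have := hpos a b
        rw [hc] at hle
        exact hz (le_antisymm hle this)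
      have hBb : muB d d' b ≠ 0 := by
        rw [← hcol b]
        intro hc
        have hle : τ a b ≤ ∑ a', τ a' b :=
          Finset.single_le_sum (fun a' _ => hpos a' b) (Finset.mem_univ a)
        have := hpos a b
        rw [hc] at hle
        exact hz (le_antisymm hle this)
      have hA' : ∃ j : Fin d, (j : ℕ) < d' ∧ a = {j} := by
        by_contra hc; exact hA (if_neg hc)
      have hB' : ∃ j : Fin d, d' ≤ (j : ℕ) ∧ (j : ℕ) < 2 * d' ∧ b = {j} := by
        by_contra hc; exact hBb (if_neg hc)
      obtain ⟨j, hj, rfl⟩ := hA'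
      obtain ⟨j', hj1, hj2, rfl⟩ := hB'
      have hne : j ≠ j' := by
        intro hc; rw [hc] at hj; omega
      rw [bdist_singletons hne]
      norm_num
      ring
  rw [cost2]
  calc ∑ a, ∑ b, τ a b * ((bdist a b : ℝ)) ^ 2
      = ∑ a, ∑ b, 4 * τ a b := by
        exact Finset.sum_congr rfl fun a _ => Finset.sum_congr rfl fun b _ => key a b
    _ = 4 * ∑ a, ∑ b, τ a b := by rw [Finset.mul_sum]; exact Finset.sum_congr rfl fun a _ => (Finset.mul_sum _ _ _).symm
    _ = 4 * ∑ a, muA d d' a := by rw [Finset.sum_congr rfl fun a _ => hrow a]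

lemma ent_muA (hd'0 : 0 < d') (h2 : 2 * d' ≤ d) :
    ent (muA d d') = Real.log d' := by
  have hdd : d' ≤ d := by omega
  have hg : Function.Injective (fun i : Fin d' => ({Fin.castLE hdd i} : Finset (Fin d))) := by
    intro i i' h
    have := Finset.singleton_injective h
    exact Fin.castLE_injective hdd this
  rw [ent, sum_support_image _ _ hg ?_]
  · have hval : ∀ i : Fin d', muA d d' ({Fin.castLE hdd i} : Finset (Fin d)) = ((d' : ℝ))⁻¹ := by
      intro i
      exact if_pos ⟨Fin.castLE hdd i, i.isLt, rfl⟩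
    rw [Finset.sum_congr rfl fun i _ => by rw [hval i]]
    rw [Finset.sum_const, Finset.card_univ, Fintype.card_fin, nsmul_eq_mul, inv_inv]
    have hne : (d' : ℝ) ≠ 0 := Nat.cast_ne_zero.2 hd'0.ne'
    field_simp
  · intro x hx
    have hx' : ∃ j : Fin d, (j : ℕ) < d' ∧ x = {j} := by
      by_contra hc
      exact hx (by rw [muA, if_neg hc]; ring)
    obtain ⟨j, hj, rfl⟩ := hx'
    refine ⟨⟨(j : ℕ), hj⟩, ?_⟩
    have : j = Fin.castLE hdd ⟨(j : ℕ), hj⟩ := Fin.ext rfl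
    rw [← this]

lemma ent_muB (hd'0 : 0 < d') (h2 : 2 * d' ≤ d) :
    ent (muB d d') = Real.log d' := by
  have hg0 : ∀ i : Fin d', (i : ℕ) + d' < d := fun i => by omega
  set g : Fin d' → Finset (Fin d) := fun i => ({⟨(i : ℕ) + d', hg0 i⟩} : Finset (Fin d)) with hgdef
  have hg : Function.Injective g := by
    intro i i' h
    have h1 := congrArg Fin.val (Finset.singleton_injective h)
    simp only at h1
    exact Fin.ext (by omega)
  rw [ent, sum_support_image _ g hg ?_]
  · have hval : ∀ i : Fin d', muB d d' (g i) = ((d' : ℝ))⁻¹ := by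
      intro i
      exact if_pos ⟨⟨(i : ℕ) + d', hg0 i⟩, by simp, by simp; omega, rfl⟩
    rw [Finset.sum_congr rfl fun i _ => by rw [hval i]]
    rw [Finset.sum_const, Finset.card_univ, Fintype.card_fin, nsmul_eq_mul, inv_inv]
    have hne : (d' : ℝ) ≠ 0 := Nat.cast_ne_zero.2 hd'0.ne'
    field_simp
  · intro x hx
    have hx' : ∃ j : Fin d, d' ≤ (j : ℕ) ∧ (j : ℕ) < 2 * d' ∧ x = {j} := by
      by_contra hc
      exact hx (by rw [muB, if_neg hc]; ring)
    obtain ⟨j, hj1, hj2, rfl⟩ := hx'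
    refine ⟨⟨(j : ℕ) - d', by omega⟩, ?_⟩
    congr 1
    exact Fin.ext (by simp [hgdef]; omega)

lemma ent_muC (hd'0 : 0 < d') (h2 : 2 * d' ≤ d) :
    ent (muC d d') = Real.log d' / 2 + Real.log 2 := by
  have hlo : ∀ i : Fin d', (i : ℕ) < d := fun i => by omega
  have hhi : ∀ i : Fin d', (i : ℕ) + d' < d := fun i => by omega
  set g : Option (Fin d') → Finset (Fin d) := fun o => match o with
    | none => ∅
    | some i => ({⟨(i : ℕ), hlo i⟩, ⟨(i : ℕ) + d', hhi i⟩} : Finset (Fin d)) with hgdef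
  have hpairne : ∀ i : Fin d',
      ({⟨(i : ℕ), hlo i⟩, ⟨(i : ℕ) + d', hhi i⟩} : Finset (Fin d)) ≠ ∅ := fun i =>
    Finset.insert_ne_empty _ _
  have hg : Function.Injective g := by
    intro o o' h
    match o, o' with
    | none, none => rfl
    | none, some i => exact absurd h.symm (hpairne i)
    | some i, none => exact absurd h (hpairne i)
    | some i, some i' =>
      have h' : ({⟨(i : ℕ), hlo i⟩, ⟨(i : ℕ) + d', hhi i⟩} : Finset (Fin d)) =
          {⟨(i' : ℕ), hlo i'⟩, ⟨(i' : ℕ) + d', hhi i'⟩} := h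
      have hm : (⟨(i : ℕ), hlo i⟩ : Fin d) ∈
          ({⟨(i' : ℕ), hlo i'⟩, ⟨(i' : ℕ) + d', hhi i'⟩} : Finset (Fin d)) :=
        h' ▸ Finset.mem_insert_self _ _
      rw [Finset.mem_insert, Finset.mem_singleton] at hm
      rcases hm with hm | hm
      · have := congrArg Fin.val hm
        simp only at this
        exact congrArg some (Fin.ext this)
      · have := congrArg Fin.val hm
        simp only at this
        omega
  rw [ent, sum_support_image _ g hg ?_]
  · rw [Fintype.sum_option]
    have hnone : muC d d' (g none) = 1 / 2 := if_pos rfl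
    have hsome : ∀ i : Fin d', muC d d' (g (some i)) = (2 * (d' : ℝ))⁻¹ := by
      intro i
      show muC d d' _ = _
      rw [muC]
      rw [if_neg (hpairne i), if_pos ⟨⟨(i : ℕ), hlo i⟩, ⟨(i : ℕ) + d', hhi i⟩, i.isLt, rfl, rfl⟩]
    rw [hnone, Finset.sum_congr rfl fun i _ => by rw [hsome i]]
    rw [Finset.sum_const, Finset.card_univ, Fintype.card_fin, nsmul_eq_mul, inv_inv]
    have hd'pos : (0 : ℝ) < (d' : ℝ) := by exact_mod_cast hd'0
    rw [one_div, inv_inv, Real.log_mul (by norm_num) (ne_of_gt hd'pos)]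
    field_simp
    ring
  · intro x hx
    by_cases hxe : x = ∅
    · exact ⟨none, hxe⟩
    · have hx' : ∃ j j' : Fin d, (j : ℕ) < d' ∧ (j' : ℕ) = (j : ℕ) + d' ∧ x = {j, j'} := by
        by_contra hc
        exact hx (by rw [muC, if_neg hxe, if_neg hc]; ring)
      obtain ⟨j, j', hj, hj', rfl⟩ := hx'
      refine ⟨some ⟨(j : ℕ), hj⟩, ?_⟩
      have e1 : j = (⟨(j : ℕ), hlo ⟨(j : ℕ), hj⟩⟩ : Fin d) := Fin.ext rfl
      have e2 : j' = (⟨(j : ℕ) + d', hhi ⟨(j : ℕ), hj⟩⟩ : Fin d) := Fin.ext hj'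
      show ({j, j'} : Finset (Fin d)) =
        {⟨(j : ℕ), hlo ⟨(j : ℕ), hj⟩⟩, ⟨(j : ℕ) + d', hhi ⟨(j : ℕ), hj⟩⟩}
      rw [← e1, ← e2]

end AuxLemmas

/-- In the `d`-hypercube (`d ≥ 10`, `4 < d' `, `2d' ≤ d`), the transportation
`τ({i},{d'+i}) = 1/d'` between the uniform measures on `A` and `B` is optimal, and
the induced midpoint distribution has entropy `ln(d')/2 + ln 2 < ln(d')`, the
average of the entropies of `μ_A` and `μ_B`. -/
theorem midpoint_entropy_drop (hd : 10 ≤ d) (hd' : 4 < d') (h2 : 2 * d' ≤ d) :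
    IsOptimalTransport bdist (tau0 d d') (muA d d') (muB d d') ∧
    ent (muC d d') = Real.log d' / 2 + Real.log 2 ∧
    ent (muC d d') < Real.log d' ∧
    ent (muA d d') = Real.log d' ∧ ent (muB d d') = Real.log d' := by
  have hd'0 : 0 < d' := by omega
  have hC := ent_muC hd'0 h2
  have hlog : Real.log 2 < Real.log d' / 2 := by
    have h4 : (4 : ℝ) < (d' : ℝ) := by exact_mod_cast hd'
    have := Real.log_lt_log (by norm_num) h4
    have h4eq : Real.log 4 = 2 * Real.log 2 := by
      rw [show (4 : ℝ) = 2 ^ 2 by norm_num, Real.log_pow]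
      push_cast; ring
    linarith [h4eq ▸ this]
  refine ⟨⟨tau0_transport h2, fun τ' hτ' => ?_⟩, hC, by rw [hC]; linarith,
    ent_muA hd'0 h2, ent_muB hd'0 h2⟩
  rw [cost2_transport h2 (tau0_transport h2), cost2_transport h2 hτ']
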